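/- Let (X, f_{1,∞}) be a periodic non-autonomous system on a Hausdorff space X with induced map g having a transitive point. If the set of topological equicontinuity points of (X, f_{1,∞}) is nonempty, then every transitive point of (X, f_{1,∞}) is a topological equicontinuity point. In particular, a minimal such system with a topological equicontinuity point is topologically equicontinuous. -/

import Mathlib

open Topology Filter Set
open scoped Uniformity

/-- `traj f n = f_n ∘ ⋯ ∘ f_1` (and `traj f 0 = id`), i.e. `f_1^n`. -/
def traj {X : Type*} (f : ℕ → X → X) : ℕ → X → X
  | 0 => id
  | n + 1 => f (n + 1) ∘ traj f n

/-- The family `f` is periodic with period `p`. -/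
def PeriodicFam {X : Type*} (f : ℕ → X → X) (p : ℕ) : Prop :=
  ∀ n, f (n + p) = f n

/-- A set of naturals is thick: it contains arbitrarily long blocks of consecutive integers. -/
def Thick (T : Set ℕ) : Prop :=
  ∀ k : ℕ, ∃ n : ℕ, ∀ i ≤ k, n + i ∈ T

/-- A set of naturals is syndetic: it has bounded gaps. -/
def Syndetic (S : Set ℕ) : Prop :=
  ∃ M : ℕ, ∀ n : ℕ, ∃ m ∈ S, n ≤ m ∧ m ≤ n + M

/-- `x` is a transitive point of the non-autonomous system `(X, f_{1,∞})`. -/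
def TransPt {X : Type*} [TopologicalSpace X] (f : ℕ → X → X) (x : X) : Prop :=
  Dense (Set.range fun n => traj f n x)

/-- `x` is a transitive point of the autonomous system `(X, g)`. -/
def TransPtAut {X : Type*} [TopologicalSpace X] (g : X → X) (x : X) : Prop :=
  Dense (Set.range fun n => g^[n] x)

/-- `x` is an equicontinuity point of `(X, f_{1,∞})` on a uniform space. -/
def EqPt {X : Type*} [UniformSpace X] (f : ℕ → X → X) (x : X) : Prop :=
  ∀ E ∈ 𝓤 X, ∃ D ∈ 𝓤 X, ∀ y : X, (x, y) ∈ D → ∀ n : ℕ, (traj f n x, traj f n y) ∈ E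

/-- `x` is a syndetically equicontinuous point of `(X, f_{1,∞})`. -/
def SynEqPt {X : Type*} [UniformSpace X] (f : ℕ → X → X) (x : X) : Prop :=
  ∀ E ∈ 𝓤 X, ∃ U ∈ 𝓝 x,
    Syndetic {n : ℕ | ∀ x₁ ∈ U, ∀ x₂ ∈ U, (traj f n x₁, traj f n x₂) ∈ E}

/-- `x` is a syndetically equicontinuous point of the autonomous system `(X, g)`. -/
def SynEqPtAut {X : Type*} [UniformSpace X] (g : X → X) (x : X) : Prop :=
  ∀ E ∈ 𝓤 X, ∃ U ∈ 𝓝 x,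
    Syndetic {n : ℕ | ∀ x₁ ∈ U, ∀ x₂ ∈ U, (g^[n] x₁, g^[n] x₂) ∈ E}

/-- `N(U, D)` for the non-autonomous system. -/
def NSet {X : Type*} (f : ℕ → X → X) (U : Set X) (D : Set (X × X)) : Set ℕ :=
  {n : ℕ | 0 < n ∧ ∃ x ∈ U, ∃ y ∈ U, (traj f n x, traj f n y) ∉ D}

/-- `N(U, D)` for the autonomous system. -/
def NSetAut {X : Type*} (g : X → X) (U : Set X) (D : Set (X × X)) : Set ℕ :=
  {n : ℕ | 0 < n ∧ ∃ x ∈ U, ∃ y ∈ U, (g^[n] x, g^[n] y) ∉ D}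

/-- Sensitivity of `(X, f_{1,∞})`. -/
def Sensitive {X : Type*} [UniformSpace X] (f : ℕ → X → X) : Prop :=
  ∃ D ∈ 𝓤 X, ∀ U : Set X, IsOpen U → U.Nonempty → (NSet f U D).Nonempty

/-- Thick sensitivity of `(X, f_{1,∞})`. -/
def ThickSensitive {X : Type*} [UniformSpace X] (f : ℕ → X → X) : Prop :=
  ∃ D ∈ 𝓤 X, ∀ U : Set X, IsOpen U → U.Nonempty → Thick (NSet f U D)

/-- Thick sensitivity of the autonomous system `(X, g)`. -/
def ThickSensitiveAut {X : Type*} [UniformSpace X] (g : X → X) : Prop :=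
  ∃ D ∈ 𝓤 X, ∀ U : Set X, IsOpen U → U.Nonempty → Thick (NSetAut g U D)

/-- Multi-sensitivity of `(X, f_{1,∞})`. -/
def MultiSensitive {X : Type*} [UniformSpace X] (f : ℕ → X → X) : Prop :=
  ∃ D ∈ 𝓤 X, ∀ (k : ℕ) (U : Fin (k + 1) → Set X),
    (∀ i, IsOpen (U i)) → (∀ i, (U i).Nonempty) → (⋂ i, NSet f (U i) D).Nonempty

/-- Multi-sensitivity of the autonomous system `(X, g)`. -/
def MultiSensitiveAut {X : Type*} [UniformSpace X] (g : X → X) : Prop :=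
  ∃ D ∈ 𝓤 X, ∀ (k : ℕ) (U : Fin (k + 1) → Set X),
    (∀ i, IsOpen (U i)) → (∀ i, (U i).Nonempty) → (⋂ i, NSetAut g (U i) D).Nonempty

/-- Eventual sensitivity of `(X, f_{1,∞})` with a given entourage `D`. -/
def EvSensitiveWith {X : Type*} [UniformSpace X] (f : ℕ → X → X) (D : Set (X × X)) : Prop :=
  ∀ x : X, ∀ E ∈ 𝓤 X, ∃ n k : ℕ, 0 < n ∧ 0 < k ∧
    ∃ y : X, (traj f n x, y) ∈ E ∧ (traj f (n + k) x, traj f k y) ∉ D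

/-- Eventual sensitivity of `(X, f_{1,∞})`. -/
def EvSensitive {X : Type*} [UniformSpace X] (f : ℕ → X → X) : Prop :=
  ∃ D ∈ 𝓤 X, EvSensitiveWith f D

/-- Eventual sensitivity of the autonomous system `(X, g)` with entourage `D`. -/
def EvSensitiveAutWith {X : Type*} [UniformSpace X] (g : X → X) (D : Set (X × X)) : Prop :=
  ∀ x : X, ∀ E ∈ 𝓤 X, ∃ q k : ℕ, 0 < q ∧ 0 < k ∧
    ∃ y : X, (g^[q] x, y) ∈ E ∧ (g^[q + k] x, g^[k] y) ∉ D

/-- `(x, y)` is a (topological) equicontinuity pair for `(X, f_{1,∞})`. -/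
def EqPair {X : Type*} [TopologicalSpace X] (f : ℕ → X → X) (x y : X) : Prop :=
  ∀ O ∈ 𝓝 y, ∃ U ∈ 𝓝 x, ∃ V ∈ 𝓝 y, ∀ n : ℕ, 0 < n →
    ((traj f n '' U) ∩ V).Nonempty → traj f n '' U ⊆ O

/-- `(x, y)` is a syndetic equicontinuity pair for `(X, f_{1,∞})`. -/
def SynEqPair {X : Type*} [TopologicalSpace X] (f : ℕ → X → X) (x y : X) : Prop :=
  ∀ O ∈ 𝓝 y, ∃ U ∈ 𝓝 x, ∃ V ∈ 𝓝 y,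
    Syndetic {n : ℕ | ((traj f n '' U) ∩ V).Nonempty → traj f n '' U ⊆ O}

/-- `O` is a splitting neighborhood of `y` with respect to `x`. -/
def SplittingNbhd {X : Type*} [TopologicalSpace X] (f : ℕ → X → X) (x y : X) (O : Set X) :
    Prop :=
  O ∈ 𝓝 y ∧ ∀ U ∈ 𝓝 x, ∀ V ∈ 𝓝 y, ∃ n : ℕ, 0 < n ∧
    ((traj f n '' U) ∩ V).Nonempty ∧ ¬ traj f n '' U ⊆ O

/-- A finite open cover of `X`. -/
def IsFinOpenCover {X : Type*} [TopologicalSpace X] (𝒰 : Finset (Set X)) : Prop :=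
  (∀ U ∈ 𝒰, IsOpen U) ∧ ⋃₀ (↑𝒰 : Set (Set X)) = Set.univ

/-- `N(V, 𝒰)`: times at which `f_1^n(V)` is not contained in any single member of `𝒰`. -/
def HNSet {X : Type*} (f : ℕ → X → X) (V : Set X) (𝒰 : Finset (Set X)) : Set ℕ :=
  {n : ℕ | 0 < n ∧ ∀ U ∈ 𝒰, ¬ traj f n '' V ⊆ U}

/-- `N(V, 𝒰)` for the autonomous system. -/
def HNSetAut {X : Type*} (g : X → X) (V : Set X) (𝒰 : Finset (Set X)) : Set ℕ :=
  {n : ℕ | 0 < n ∧ ∀ U ∈ 𝒰, ¬ g^[n] '' V ⊆ U}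

/-- Hausdorff sensitivity of `(X, f_{1,∞})`. -/
def HSensitive {X : Type*} [TopologicalSpace X] (f : ℕ → X → X) : Prop :=
  ∃ 𝒰 : Finset (Set X), IsFinOpenCover 𝒰 ∧
    ∀ V : Set X, IsOpen V → V.Nonempty → (HNSet f V 𝒰).Nonempty

/-- Hausdorff sensitivity of the autonomous system `(X, g)`. -/
def HSensitiveAut {X : Type*} [TopologicalSpace X] (g : X → X) : Prop :=
  ∃ 𝒰 : Finset (Set X), IsFinOpenCover 𝒰 ∧
    ∀ V : Set X, IsOpen V → V.Nonempty → (HNSetAut g V 𝒰).Nonempty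

/-- Thick Hausdorff sensitivity of `(X, f_{1,∞})`. -/
def ThickHSensitive {X : Type*} [TopologicalSpace X] (f : ℕ → X → X) : Prop :=
  ∃ 𝒰 : Finset (Set X), IsFinOpenCover 𝒰 ∧
    ∀ V : Set X, IsOpen V → V.Nonempty → Thick (HNSet f V 𝒰)

/-- Thick Hausdorff sensitivity of the autonomous system `(X, g)`. -/
def ThickHSensitiveAut {X : Type*} [TopologicalSpace X] (g : X → X) : Prop :=
  ∃ 𝒰 : Finset (Set X), IsFinOpenCover 𝒰 ∧
    ∀ V : Set X, IsOpen V → V.Nonempty → Thick (HNSetAut g V 𝒰)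

/-- Multi-Hausdorff sensitivity of the autonomous system `(X, g)`. -/
def MultiHSensitiveAut {X : Type*} [TopologicalSpace X] (g : X → X) : Prop :=
  ∃ 𝒰 : Finset (Set X), IsFinOpenCover 𝒰 ∧
    ∀ (m : ℕ) (V : Fin (m + 1) → Set X),
      (∀ i, IsOpen (V i)) → (∀ i, (V i).Nonempty) → (⋂ i, HNSetAut g (V i) 𝒰).Nonempty


/-!
Write `g = f_1^p` and `S = {g^k x}` for the `g`-orbit of a transitive point `x`. Topological
equicontinuity pulls back along trajectories: in a Hausdorff space the finitely many times before
a trajectory enters a good neighbourhood are controlled by continuity, and later times by the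
equicontinuity there. So it suffices to find `z` in the closure of `S` (periodicity makes the
system seen from time `kp` the original one).

If `X` has an isolated point, it lies on the orbit of `x` and is trivially an equicontinuity point.
Otherwise, an equicontinuity point `z` has a `g`-orbit which is dense in every tail: the transitive
orbit of `g` passes from near `z` to near any `y` at arbitrarily late times, and equicontinuity
at `z` forces the orbit of `z` to follow. The orbit of `x` is covered by the `p` sets `f_1^c(S)`,
so the closure of one of them has nonempty interior. The orbit of `z` enters that interior through
some `f_1^c(g^m z)`, then returns near `z` at a later time `jp`; continuity of the passage from
time `mp + c` to time `jp` carries a nearby point of `f_1^c(S)` into `S`, close to `z`.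
-/

open Function

section

variable {X : Type*}

theorem traj_add (f : ℕ → X → X) (m n : ℕ) :
    traj f (m + n) = traj (fun j => f (j + m)) n ∘ traj f m := by
  induction n with
  | zero => rfl
  | succ n ih =>
    show f (m + n + 1) ∘ traj f (m + n) = (f (n + 1 + m) ∘ _) ∘ _
    rw [ih, show m + n + 1 = n + 1 + m by omega]
    rfl

theorem continuous_traj [TopologicalSpace X] {f : ℕ → X → X} (hf : ∀ n, Continuous (f n))
    (n : ℕ) : Continuous (traj f n) := by
  induction n with
  | zero => exact continuous_id
  | succ n ih => exact (hf (n + 1)).comp ih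

namespace PeriodicFam

variable {f : ℕ → X → X} {p : ℕ}

theorem shift_mul (hper : PeriodicFam f p) (k : ℕ) : (fun j => f (j + k * p)) = f := by
  induction k with
  | zero => simp
  | succ k ih =>
    funext j
    rw [add_one_mul, ← add_assoc, hper]
    exact congrFun ih j

theorem traj_mul (hper : PeriodicFam f p) (k : ℕ) : traj f (k * p) = (traj f p)^[k] := by
  induction k with
  | zero => simp [traj]
  | succ k ih => rw [add_one_mul, traj_add, hper.shift_mul, iterate_succ', ih]

theorem traj_mul_add (hper : PeriodicFam f p) (k n : ℕ) :
    traj f (k * p + n) = traj f n ∘ (traj f p)^[k] := by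
  rw [traj_add, hper.shift_mul, hper.traj_mul]

end PeriodicFam

def EqWitness (f : ℕ → X → X) (U V O : Set X) : Prop :=
  ∀ n : ℕ, 0 < n → ((traj f n '' U) ∩ V).Nonempty → traj f n '' U ⊆ O

theorem EqWitness.mono {f : ℕ → X → X} {U V O U' V' : Set X} (h : EqWitness f U V O)
    (hU : U' ⊆ U) (hV : V' ⊆ V) : EqWitness f U' V' O := fun n hn hmeet =>
  (image_mono hU).trans (h n hn (hmeet.mono (inter_subset_inter (image_mono hU) hV)))

section Topology

variable [TopologicalSpace X]

theorem exists_nhds_image_subset_or_disjoint {Y : Type*} [TopologicalSpace Y] [T2Space Y]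
    {h : X → Y} (hh : Continuous h) (x : X) {y : Y} {O : Set Y} (hO : O ∈ 𝓝 y) :
    ∃ W ∈ 𝓝 x, ∃ B ∈ 𝓝 y, h '' W ⊆ O ∨ Disjoint (h '' W) B := by
  by_cases hxy : h x = y
  · exact ⟨h ⁻¹' O, hh.continuousAt.preimage_mem_nhds (hxy ▸ hO), univ, univ_mem,
      Or.inl (image_preimage_subset h O)⟩
  · obtain ⟨A, B, hA, hB, hxA, hyB, hAB⟩ := t2_separation hxy
    exact ⟨h ⁻¹' A, hh.continuousAt.preimage_mem_nhds (hA.mem_nhds hxA), B, hB.mem_nhds hyB,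
      Or.inr (hAB.mono_left (image_preimage_subset h A))⟩

theorem exists_eqWitness_of_shift [T2Space X] {f : ℕ → X → X} (hf : ∀ n, Continuous (f n))
    {x y : X} {U V O : Set X} {M : ℕ} (hO : O ∈ 𝓝 y) (hU : traj f M ⁻¹' U ∈ 𝓝 x)
    (hV : V ∈ 𝓝 y) (h : EqWitness (fun j => f (j + M)) U V O) :
    ∃ U' ∈ 𝓝 x, ∃ V' ∈ 𝓝 y, EqWitness f U' V' O := by
  choose W hW B hB hWB using
    fun n => exists_nhds_image_subset_or_disjoint (continuous_traj hf n) x hO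
  refine ⟨traj f M ⁻¹' U ∩ ⋂ n ∈ Finset.range (M + 1), W n,
    inter_mem hU ((biInter_finset_mem _).2 fun n _ => hW n),
    V ∩ ⋂ n ∈ Finset.range (M + 1), B n, inter_mem hV ((biInter_finset_mem _).2 fun n _ => hB n),
    fun n hn hmeet => ?_⟩
  rcases le_or_gt n M with hnM | hMn
  · have hnM : n ∈ Finset.range (M + 1) := Finset.mem_range.2 (Nat.lt_succ_of_le hnM)
    have hsub : traj f M ⁻¹' U ∩ ⋂ n ∈ Finset.range (M + 1), W n ⊆ W n :=
      inter_subset_right.trans (iInter₂_subset n hnM)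
    refine (image_mono hsub).trans ((hWB n).resolve_right fun hdisj => ?_)
    obtain ⟨v, hvW, hvB⟩ := hmeet
    exact disjoint_left.1 hdisj (image_mono hsub hvW) (iInter₂_subset n hnM hvB.2)
  · obtain ⟨s, rfl⟩ : ∃ s, n = M + s := ⟨n - M, by omega⟩
    rw [traj_add, image_comp] at hmeet ⊢
    exact (h.mono (image_subset_iff.2 inter_subset_left) inter_subset_left) s (by omega) hmeet

theorem EqPair.of_shift [T2Space X] {f : ℕ → X → X} (hf : ∀ n, Continuous (f n)) {x y : X}
    {M : ℕ} (h : EqPair (fun j => f (j + M)) (traj f M x) y) : EqPair f x y := fun O hO =>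
  let ⟨_, hU, _, hV, hw⟩ := h O hO
  exists_eqWitness_of_shift hf hO ((continuous_traj hf M).continuousAt.preimage_mem_nhds hU) hV hw

theorem EqPair.of_mem_closure_iterate [T2Space X] {f : ℕ → X → X}
    (hf : ∀ n, Continuous (f n)) {p : ℕ} (hper : PeriodicFam f p) {x y z : X}
    (hz : EqPair f z y) (hzx : z ∈ closure (range fun k => (traj f p)^[k] x)) :
    EqPair f x y := by
  intro O hO
  obtain ⟨U, hU, V, hV, hw⟩ := hz O hO
  obtain ⟨_, hkU, k, rfl⟩ :=
    mem_closure_iff.1 hzx _ isOpen_interior (mem_interior_iff_mem_nhds.2 hU)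
  have hk : traj f (k * p) ⁻¹' U ∈ 𝓝 x := by
    rw [hper.traj_mul]
    exact ((continuous_traj hf p).iterate k).continuousAt.preimage_mem_nhds
      (mem_interior_iff_mem_nhds.1 hkU)
  exact exists_eqWitness_of_shift hf hO hk hV (by rwa [hper.shift_mul])

theorem eqPair_of_isOpen_singleton {w : X} (hw : IsOpen ({w} : Set X)) (f : ℕ → X → X) (y : X) :
    EqPair f w y := by
  refine fun O hO => ⟨{w}, hw.mem_nhds rfl, O, hO, fun n _ hmeet => ?_⟩
  obtain ⟨_, ⟨_, rfl, rfl⟩, hO⟩ := hmeet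
  simp [hO]

theorem dense_biInter_finset_of_isOpen {ι : Type*} {t : Finset ι} {u : ι → Set X}
    (ho : ∀ i ∈ t, IsOpen (u i)) (hd : ∀ i ∈ t, Dense (u i)) : Dense (⋂ i ∈ t, u i) := by
  classical
  induction t using Finset.induction_on with
  | empty => simp
  | insert a t _ ih =>
    rw [Finset.set_biInter_insert]
    exact (hd a (Finset.mem_insert_self a t)).inter_of_isOpen_left
      (ih (fun i hi => ho i (Finset.mem_insert_of_mem hi))
        fun i hi => hd i (Finset.mem_insert_of_mem hi))
      (ho a (Finset.mem_insert_self a t))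

theorem Dense.exists_nonempty_interior_closure [Nonempty X] {ι : Type*} {t : Finset ι}
    {s : ι → Set X} (h : Dense (⋃ i ∈ t, s i)) : ∃ i ∈ t, (interior (closure (s i))).Nonempty := by
  by_contra! hempty
  have hdense : Dense (⋂ i ∈ t, (closure (s i))ᶜ) :=
    dense_biInter_finset_of_isOpen (fun _ _ => isClosed_closure.isOpen_compl)
      fun i hi => interior_eq_empty_iff_dense_compl.1 (hempty i hi)
  obtain ⟨v, hvc, hvs⟩ := h.inter_open_nonempty _
    (isOpen_biInter_finset fun _ _ => isClosed_closure.isOpen_compl) hdense.nonempty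
  obtain ⟨i, hi, hvi⟩ := mem_iUnion₂.1 hvs
  exact mem_iInter₂.1 hvc i hi (subset_closure hvi)

theorem TransPt.exists_nonempty_interior_closure_phase {f : ℕ → X → X} {p : ℕ} (hp : 0 < p)
    (hper : PeriodicFam f p) {x : X} (hx : TransPt f x) :
    ∃ c < p, (interior (closure (traj f c '' range fun k => (traj f p)^[k] x))).Nonempty := by
  have : Nonempty X := ⟨x⟩
  have hcover : (range fun n => traj f n x) ⊆
      ⋃ c ∈ Finset.range p, traj f c '' range fun k => (traj f p)^[k] x := by
    rintro _ ⟨n, rfl⟩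
    refine mem_iUnion₂.2 ⟨n % p, Finset.mem_range.2 (Nat.mod_lt n hp), _, ⟨n / p, rfl⟩, ?_⟩
    rw [← comp_apply (f := traj f (n % p)), ← hper.traj_mul_add, Nat.div_add_mod']
  obtain ⟨c, hc, hint⟩ := (hx.mono hcover).exists_nonempty_interior_closure
  exact ⟨c, Finset.mem_range.1 hc, hint⟩

theorem exists_ge_mem_of_dense_range [T1Space X] [∀ x : X, (𝓝[≠] x).NeBot] {s : ℕ → X}
    (hs : Dense (range s)) {W : Set X} (hW : IsOpen W) (hne : W.Nonempty) (K : ℕ) :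
    ∃ n ≥ K, s n ∈ W := by
  obtain ⟨_, ⟨⟨n, rfl⟩, hn⟩, hnW⟩ :=
    (hs.sdiff_finite ((finite_lt_nat K).image s)).exists_mem_open hW hne
  exact ⟨n, not_lt.1 fun h => hn ⟨n, h, rfl⟩, hnW⟩

theorem exists_ge_iterate_mem_of_eqPair [T1Space X] [∀ x : X, (𝓝[≠] x).NeBot]
    {f : ℕ → X → X} {p : ℕ} (hp : 0 < p) (hper : PeriodicFam f p) {x₀ z : X}
    (hx₀ : TransPtAut (traj f p) x₀) (hz : ∀ y, EqPair f z y) {W : Set X} (hW : IsOpen W)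
    (hne : W.Nonempty) (K : ℕ) : ∃ m ≥ K, (traj f p)^[m] z ∈ W := by
  obtain ⟨y, hy⟩ := hne
  obtain ⟨U, hU, V, hV, hw⟩ := hz y W (hW.mem_nhds hy)
  obtain ⟨i, -, hi⟩ := exists_ge_mem_of_dense_range hx₀ isOpen_interior
    ⟨z, mem_interior_iff_mem_nhds.2 hU⟩ 0
  obtain ⟨j, hj, hjV⟩ := exists_ge_mem_of_dense_range hx₀ isOpen_interior
    ⟨y, mem_interior_iff_mem_nhds.2 hV⟩ (i + K + 1)
  have hji : (traj f p)^[j - i] ((traj f p)^[i] x₀) = (traj f p)^[j] x₀ := by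
    rw [← iterate_add_apply, Nat.sub_add_cancel (by omega)]
  have hmeet : (traj f ((j - i) * p) '' U ∩ V).Nonempty := by
    rw [hper.traj_mul]
    exact ⟨_, ⟨_, interior_subset hi, hji⟩, interior_subset hjV⟩
  refine ⟨j - i, by omega, ?_⟩
  rw [← hper.traj_mul]
  exact hw _ (Nat.mul_pos (by omega) hp) hmeet ⟨z, mem_of_mem_nhds hU, rfl⟩

/-- Applied with `g = f_1^p`, `ψ = f_1^c` and `φ` the passage from time `c` to time `p`. -/
theorem mem_closure_of_returns {g φ ψ : X → X} (hφ : Continuous φ) (hψ : Continuous ψ)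
    (hg : φ ∘ ψ = g) {S : Set X} (hS : MapsTo g S S) {z : X} {m : ℕ}
    (hm : ψ (g^[m] z) ∈ closure (ψ '' S)) (hrec : ∀ U ∈ 𝓝 z, ∃ j > m, g^[j] z ∈ U) :
    z ∈ closure S := by
  refine mem_closure_iff.2 fun U hU hzU => ?_
  obtain ⟨j, hj, hjU⟩ := hrec U (hU.mem_nhds hzU)
  obtain ⟨i, rfl⟩ : ∃ i, j = i + 1 + m := ⟨j - m - 1, by omega⟩
  have hcomp : ∀ w, (g^[i] ∘ φ) (ψ w) = g^[i + 1] w := fun w => by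
    rw [comp_apply, ← comp_apply (f := φ), hg, iterate_succ_apply]
  have hgc : Continuous g := hg ▸ hφ.comp hψ
  have hnhds : (g^[i] ∘ φ) ⁻¹' U ∈ 𝓝 (ψ (g^[m] z)) :=
    ((hgc.iterate i).comp hφ).continuousAt.preimage_mem_nhds
      (by rw [hcomp, ← iterate_add_apply]; exact hU.mem_nhds hjU)
  obtain ⟨_, hU', s, hs, rfl⟩ := mem_closure_iff_nhds.1 hm _ hnhds
  exact ⟨g^[i + 1] s, by rwa [← hcomp], hS.iterate (i + 1) hs⟩

theorem mem_closure_iterate_of_eqPair [T1Space X] [∀ x : X, (𝓝[≠] x).NeBot]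
    {f : ℕ → X → X} (hf : ∀ n, Continuous (f n)) {p : ℕ} (hp : 0 < p) (hper : PeriodicFam f p)
    {x₀ z x : X} (hx₀ : TransPtAut (traj f p) x₀) (hz : ∀ y, EqPair f z y) (hx : TransPt f x) :
    z ∈ closure (range fun k => (traj f p)^[k] x) := by
  obtain ⟨c, hc, w, hw⟩ := hx.exists_nonempty_interior_closure_phase hp hper
  obtain ⟨_, hsw, s, -, rfl⟩ := mem_closure_iff.1 (interior_subset hw) _ isOpen_interior hw
  obtain ⟨m, -, hm⟩ := exists_ge_iterate_mem_of_eqPair hp hper hx₀ hz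
    (isOpen_interior.preimage (continuous_traj hf c)) ⟨s, hsw⟩ 0
  refine mem_closure_of_returns (φ := traj (fun j => f (j + c)) (p - c))
    (continuous_traj (fun _ => hf _) _) (continuous_traj hf c) ?_ ?_ (interior_subset hm)
    fun U hU => ?_
  · rw [← traj_add, Nat.add_sub_cancel' hc.le]
  · rintro _ ⟨k, rfl⟩
    exact ⟨k + 1, iterate_succ_apply' _ k x⟩
  · obtain ⟨j, hj, hjU⟩ := exists_ge_iterate_mem_of_eqPair hp hper hx₀ hz isOpen_interior
      ⟨z, mem_interior_iff_mem_nhds.2 hU⟩ (m + 1)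
    exact ⟨j, hj, interior_subset hjU⟩

theorem TransPt.forall_eqPair [T2Space X] {f : ℕ → X → X} (hf : ∀ n, Continuous (f n))
    {p : ℕ} (hp : 0 < p) (hper : PeriodicFam f p) {x₀ z x : X}
    (hx₀ : TransPtAut (traj f p) x₀) (hz : ∀ y, EqPair f z y) (hx : TransPt f x) (y : X) :
    EqPair f x y := by
  by_cases hiso : ∃ w : X, IsOpen ({w} : Set X)
  · obtain ⟨w, hw⟩ := hiso
    obtain ⟨_, ⟨n, rfl⟩, hn⟩ := hx.exists_mem_open hw ⟨w, rfl⟩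
    exact (eqPair_of_isOpen_singleton ((mem_singleton_iff.1 hn).symm ▸ hw) _ y).of_shift hf
  · push Not at hiso
    have : ∀ w : X, (𝓝[≠] w).NeBot :=
      fun w => ⟨fun h => hiso w ((isOpen_singleton_iff_punctured_nhds w).2 h)⟩
    exact (hz y).of_mem_closure_iterate hf hper (mem_closure_iterate_of_eqPair hf hp hper hx₀ hz hx)

end Topology

end

theorem transPt_topEq {X : Type*} [TopologicalSpace X] [T2Space X]
    (f : ℕ → X → X) (hf : ∀ n, Continuous (f n))
    (p : ℕ) (hp : 0 < p) (hper : PeriodicFam f p)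
    (htrans : ∃ x, TransPtAut (traj f p) x)
    (hTEq : ∃ z : X, ∀ y : X, EqPair f z y) :
    (∀ x : X, TransPt f x → ∀ y : X, EqPair f x y) ∧
    ((∀ x : X, TransPt f x) → ∀ x y : X, EqPair f x y) := by
  obtain ⟨x₀, hx₀⟩ := htrans
  obtain ⟨z, hz⟩ := hTEq
  have hmain : ∀ x : X, TransPt f x → ∀ y : X, EqPair f x y :=
    fun x hx => hx.forall_eqPair hf hp hper hx₀ hz
  exact ⟨hmain, fun h x => hmain x (h x)⟩
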